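/- Under the same hypotheses as the previous statement (Lemma 4.1 of the paper), the imaginary part satisfies $y_z=-\frac{h^2 u_0\sum_j\frac{y_2 w_j\lambda_j v_0}{(\lambda_j+u_0)^2+v_0^2}+h^2 v_0\big(1-y_2+\sum_j\frac{y_2 w_j\lambda_j(\lambda_j+u_0)}{(\lambda_j+u_0)^2+v_0^2}\big)}{y_2 D}+\frac{y_1 v_0}{y_2}$, where $D$ is the denominator defined there. -/

import Mathlib

/-!
Multiplying by the conjugate, `wⱼλⱼ/(λⱼ + m₀)` has real part `wⱼλⱼ(λⱼ + u₀)/|λⱼ + m₀|²` and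
imaginary part `-wⱼλⱼv₀/|λⱼ + m₀|²`, so the bracket `W = 1 - y₂ + y₂ ∑ⱼ wⱼλⱼ/(λⱼ + m₀)` is
`S₁ - i S₂` with `|W|² = D`, and `Im(-h² m₀ / (y₂ W)) = -h² (v₀ S₁ + u₀ S₂) / (y₂ D)`.
-/

open Finset

namespace Complex

theorem div_im_eq (z w : ℂ) :
    (z / w).im = (z.im * w.re - z.re * w.im) / (w.re ^ 2 + w.im ^ 2) := by
  rw [div_im, normSq_apply, ← sub_div, sq, sq]

theorem re_ofReal_div (c : ℝ) (w : ℂ) :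
    ((c : ℂ) / w).re = c * w.re / (w.re ^ 2 + w.im ^ 2) := by
  simp [div_re, normSq_apply, sq]

theorem im_ofReal_div (c : ℝ) (w : ℂ) :
    ((c : ℂ) / w).im = -(c * w.im / (w.re ^ 2 + w.im ^ 2)) := by
  simp [div_im_eq, neg_div]

theorem re_sum_ofReal_div_ofReal_add {ι : Type*} (s : Finset ι) (c l : ι → ℝ) (m : ℂ) :
    (∑ j ∈ s, (c j : ℂ) / (l j + m)).re
      = ∑ j ∈ s, c j * (l j + m.re) / ((l j + m.re) ^ 2 + m.im ^ 2) := by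
  simp only [re_sum, re_ofReal_div, add_re, ofReal_re, add_im, ofReal_im, zero_add]

theorem im_sum_ofReal_div_ofReal_add {ι : Type*} (s : Finset ι) (c l : ι → ℝ) (m : ℂ) :
    (∑ j ∈ s, (c j : ℂ) / (l j + m)).im
      = -∑ j ∈ s, c j * m.im / ((l j + m.re) ^ 2 + m.im ^ 2) := by
  simp only [im_sum, im_ofReal_div, add_re, ofReal_re, add_im, ofReal_im, zero_add,
    sum_neg_distrib]

end Complex

theorem stmt15_general (p : ℕ) (lam w : Fin p → ℝ)
    (xz yz u0 v0 y1 y2 h2 : ℝ)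
    (heq : (⟨xz, yz⟩ : ℂ)
      = -((h2 : ℂ) * (⟨u0, v0⟩ : ℂ))
          / ((y2 : ℂ) * (1 - (y2 : ℂ)
              + (y2 : ℂ) * ∑ j, (w j : ℂ) * (lam j : ℂ) / ((lam j : ℂ) + (⟨u0, v0⟩ : ℂ))))
        + (y1 : ℂ) * (⟨u0, v0⟩ : ℂ) / (y2 : ℂ)) :
    yz = -(h2 * u0 * ∑ j, y2 * w j * lam j * v0 / ((lam j + u0) ^ 2 + v0 ^ 2)
            + h2 * v0 * (1 - y2 + ∑ j, y2 * w j * lam j * (lam j + u0) / ((lam j + u0) ^ 2 + v0 ^ 2)))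
          / (y2 * ((1 - y2 + ∑ j, y2 * w j * lam j * (lam j + u0) / ((lam j + u0) ^ 2 + v0 ^ 2)) ^ 2
              + (∑ j, y2 * w j * lam j * v0 / ((lam j + u0) ^ 2 + v0 ^ 2)) ^ 2))
        + y1 * v0 / y2 := by
  set W : ℂ := 1 - (y2 : ℂ)
    + (y2 : ℂ) * ∑ j, (w j : ℂ) * (lam j : ℂ) / ((lam j : ℂ) + (⟨u0, v0⟩ : ℂ)) with hW
  have hW_sum : W = 1 - (y2 : ℂ)
      + ∑ j, ((y2 * w j * lam j : ℝ) : ℂ) / ((lam j : ℂ) + (⟨u0, v0⟩ : ℂ)) := by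
    rw [hW, mul_sum]
    push_cast
    simp only [mul_div_assoc, mul_assoc]
  have hW_re :
      W.re = 1 - y2 + ∑ j, y2 * w j * lam j * (lam j + u0) / ((lam j + u0) ^ 2 + v0 ^ 2) := by
    rw [hW_sum, Complex.add_re, Complex.re_sum_ofReal_div_ofReal_add]
    rfl
  have hW_im : W.im = -∑ j, y2 * w j * lam j * v0 / ((lam j + u0) ^ 2 + v0 ^ 2) := by
    rw [hW_sum, Complex.add_im, Complex.im_sum_ofReal_div_ofReal_add]
    simp
  have him := congrArg Complex.im heq
  rw [div_mul_eq_div_div_swap, Complex.add_im, Complex.div_ofReal_im, Complex.div_ofReal_im] at him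
  simp only [Complex.div_im_eq, Complex.neg_im,
    Complex.neg_re, Complex.re_ofReal_mul, Complex.im_ofReal_mul, hW_re, hW_im] at him
  rw [him, div_div, mul_comm _ y2]
  ring

/-- Lemma 4.1, imaginary-part formula (4.3). -/
theorem stmt15 (p : ℕ) (lam w : Fin p → ℝ)
    (hlam : ∀ j, 0 < lam j) (hw : ∀ j, 0 ≤ w j) (hwsum : ∑ j, w j = 1)
    (xz yz u0 v0 y1 y2 h2 : ℝ) (hy1 : 0 < y1) (hy2 : 0 < y2)
    (hh2 : h2 = y1 + y2 - y1 * y2)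
    (hpos : ∀ j, 0 < (lam j + u0) ^ 2 + v0 ^ 2)
    (hD : ((1 - y2 + ∑ j, y2 * w j * lam j * (lam j + u0) / ((lam j + u0) ^ 2 + v0 ^ 2)) ^ 2
          + (∑ j, y2 * w j * lam j * v0 / ((lam j + u0) ^ 2 + v0 ^ 2)) ^ 2) ≠ 0)
    (heq : (⟨xz, yz⟩ : ℂ)
      = -((h2 : ℂ) * (⟨u0, v0⟩ : ℂ))
          / ((y2 : ℂ) * (1 - (y2 : ℂ)
              + (y2 : ℂ) * ∑ j, (w j : ℂ) * (lam j : ℂ) / ((lam j : ℂ) + (⟨u0, v0⟩ : ℂ))))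
        + (y1 : ℂ) * (⟨u0, v0⟩ : ℂ) / (y2 : ℂ)) :
    yz = -(h2 * u0 * ∑ j, y2 * w j * lam j * v0 / ((lam j + u0) ^ 2 + v0 ^ 2)
            + h2 * v0 * (1 - y2 + ∑ j, y2 * w j * lam j * (lam j + u0) / ((lam j + u0) ^ 2 + v0 ^ 2)))
          / (y2 * ((1 - y2 + ∑ j, y2 * w j * lam j * (lam j + u0) / ((lam j + u0) ^ 2 + v0 ^ 2)) ^ 2
              + (∑ j, y2 * w j * lam j * v0 / ((lam j + u0) ^ 2 + v0 ^ 2)) ^ 2))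
        + y1 * v0 / y2 :=
  stmt15_general p lam w xz yz u0 v0 y1 y2 h2 heq
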